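/- arXiv:2502.07633 — 4 statements merged into one kernel-verified Lean document; each statement's English description precedes it below -/
import Mathlib

section
/- At most linear growth of the maximal displacement (Proposition 2): Define Max_n = max_{v∈T_n} |X_v|. For every t > 0 with ϑ₁(t) = ∫_G e^{t|x|} dμ(x) < ∞ and every a > log(ρ·ϑ₁(t))/t, one has limsup_{n→∞} Max_n/n ≤ a almost surely. In particular there exists a > 0 such that limsup_{n→∞} Max_n/n ≤ a almost surely. -/
/-!
First-moment argument. For `t ≥ 0` the weight `x ↦ e^{t|x|}` is submultiplicative, so for
`v ∈ Tₙ` one has `e^{t|X_v|} ≤ ∏_{i<n} e^{t|ξ_{(v₁,…,v_{i+1})}|}`, and `e^{t·Maxₙ}` is dominated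
by the sum `Wₙ` of these products over `Tₙ`. Writing `Wₙ` as a sum over all labels of length `n`
of products of independent factors `1{vᵢ₊₁ < N_{(v₁,…,vᵢ)}}` and `e^{t|ξ_{(v₁,…,vᵢ₊₁)}|}`, and using
`∑ⱼ π(j, ∞) = ρ`, gives `E Wₙ = (ρ ϑ₁(t))ⁿ`. Markov's inequality then yields
`P(Maxₙ > a n) ≤ (ρ ϑ₁(t) e^{-t a})ⁿ`, which is summable as soon as `a > log(ρ ϑ₁(t))/t`, and
Borel–Cantelli concludes.
-/

open MeasureTheory ProbabilityTheory Filter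
open scoped Topology ENNReal Classical

namespace BRWPaper

/-- Level `n` of the Galton–Watson tree encoded by Ulam–Harris labels: the root is the empty
list, and the children of a vertex `v` are the labels `v ++ [j]` for `j < N v`, where `N v` is
the offspring number of `v`. -/
def level (N : List ℕ → ℕ) : ℕ → Finset (List ℕ)
  | 0 => {([] : List ℕ)}
  | n + 1 => (level N n).biUnion fun v => (Finset.range (N v)).image fun j => v ++ [j]

/-- Position of the particle with label `v = (v₁, …, vₙ)`:
`X_v = ξ_{(v₁)} · ξ_{(v₁,v₂)} ⋯ ξ_{(v₁,…,vₙ)}` (ordered product of the steps along `v`). -/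
def pos {G : Type*} [Group G] (ξ : List ℕ → G) (v : List ℕ) : G :=
  ((List.range v.length).map fun i => ξ (v.take (i + 1))).prod

/-- The single-particle walk `Y_n = ξ'₁ ⋯ ξ'ₙ`. -/
def walk {G : Type*} [Group G] (ξ : ℕ → G) (n : ℕ) : G :=
  ((List.range n).map fun i => ξ (i + 1)).prod

/-- The family of σ-algebras generated by the offspring numbers `N v` and the steps `ξ v`.
Joint independence of this family (together with the laws `N v ∼ π`, `ξ v ∼ μ`) realizes the
product measure `(⨂_v π) ⊗ (⨂_v μ)` of the paper. -/
def famSigma {Ω G : Type*} [MeasurableSpace G] (N : List ℕ → Ω → ℕ) (ξ : List ℕ → Ω → G) :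
    List ℕ ⊕ List ℕ → MeasurableSpace Ω :=
  Sum.elim (fun v => MeasurableSpace.comap (N v) inferInstance)
    (fun v => MeasurableSpace.comap (ξ v) inferInstance)

/-- The distribution function `Φ` of the standard normal distribution. -/
noncomputable def stdGaussCDF (x : ℝ) : ℝ := (gaussianReal 0 1 (Set.Iic x)).toReal

/-- The maximal displacement `Maxₙ = max_{v ∈ Tₙ} |X_v|` (with the convention that the
maximum of the empty set is `0`). -/
noncomputable def maxDisp {G : Type*} [Group G] (nm : G → ℝ) (N : List ℕ → ℕ)
    (ξ : List ℕ → G) (n : ℕ) : ℝ :=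
  WithBot.unbotD 0 (((level N n).image fun v => nm (pos ξ v)).max)

open Finset

theorem nonneg_of_subadditive {G : Type*} [Group G] {nm : G → ℝ} (h_one : nm 1 = 0)
    (h_inv : ∀ x, nm x⁻¹ = nm x) (h_mul : ∀ x y, nm (x * y) ≤ nm x + nm y) (x : G) :
    0 ≤ nm x := by
  have := h_mul x x⁻¹
  rw [mul_inv_cancel, h_one, h_inv] at this
  linarith

section Deterministic

variable {G : Type*} [Group G] {nm : G → ℝ} {N : List ℕ → ℕ} {ξ : List ℕ → G} {n : ℕ}

theorem mem_level_iff {v : List ℕ} :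
    v ∈ level N n ↔ v.length = n ∧ ∀ i < n, v.getD i 0 < N (v.take i) := by
  induction n generalizing v with
  | zero => simp [level, List.length_eq_zero_iff]
  | succ n ih =>
    simp only [level, mem_biUnion, mem_image, mem_range]
    constructor
    · rintro ⟨u, hu, j, hj, rfl⟩
      obtain ⟨hlen, hu⟩ := ih.1 hu
      refine ⟨by simp [hlen], fun i hi => ?_⟩
      rcases Nat.lt_succ_iff_lt_or_eq.1 hi with hi | rfl
      · rw [List.getD_append _ _ _ _ (by omega), List.take_append_of_le_length (by omega)]
        exact hu i hi
      · subst hlen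
        simpa using hj
    · rintro ⟨hlen, hv⟩
      rcases v.eq_nil_or_concat' with rfl | ⟨u, j, rfl⟩
      · simp at hlen
      have hlen : u.length = n := by simpa using hlen
      refine ⟨u, ih.2 ⟨hlen, fun i hi => ?_⟩, j, ?_, rfl⟩
      · have := hv i (by omega)
        rwa [List.getD_append _ _ _ _ (by omega), List.take_append_of_le_length (by omega)] at this
      · subst hlen
        simpa using hv u.length (by omega)

theorem maxDisp_nonneg (h : ∀ x, 0 ≤ nm x) : 0 ≤ maxDisp nm N ξ n := by
  unfold maxDisp
  cases hmax : ((level N n).image fun v => nm (pos ξ v)).max with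
  | bot => rfl
  | coe m =>
    obtain ⟨v, -, rfl⟩ := mem_image.1 (mem_of_max hmax)
    exact h _

theorem exists_mem_level_lt_of_lt_maxDisp {c : ℝ} (hc : 0 ≤ c) (h : c < maxDisp nm N ξ n) :
    ∃ v ∈ level N n, c < nm (pos ξ v) := by
  unfold maxDisp at h
  cases hmax : ((level N n).image fun v => nm (pos ξ v)).max with
  | bot => simp [hmax] at h; linarith
  | coe m =>
    rw [hmax, WithBot.unbotD_coe] at h
    obtain ⟨v, hv, rfl⟩ := mem_image.1 (mem_of_max hmax)
    exact ⟨v, hv, h⟩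

end Deterministic

section Weights

variable {G : Type*}

noncomputable def levelWeight (w : G → ℝ≥0∞) (N : List ℕ → ℕ) (ξ : List ℕ → G) (n : ℕ) : ℝ≥0∞ :=
  ∑ v ∈ level N n, ∏ i ∈ range n, w (ξ (v.take (i + 1)))

/-- The factor `1{vᵢ₊₁ < N_{(v₁,…,vᵢ)}}` makes the product vanish unless `v ∈ T`. -/
noncomputable def pathWeight (w : G → ℝ≥0∞) (N : List ℕ → ℕ) (ξ : List ℕ → G) (v : List ℕ) : ℝ≥0∞ :=
  ∏ i ∈ range v.length,
    (Set.Ioi (v.getD i 0)).indicator 1 (N (v.take i)) * w (ξ (v.take (i + 1)))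

theorem levelWeight_eq_tsum (w : G → ℝ≥0∞) (N : List ℕ → ℕ) (ξ : List ℕ → G) (n : ℕ) :
    levelWeight w N ξ n = ∑' v, if v.length = n then pathWeight w N ξ v else 0 := by
  rw [levelWeight, sum_eq_tsum_indicator]
  congr 1 with v
  by_cases hv : v.length = n
  · rw [if_pos hv, pathWeight, prod_mul_distrib, hv]
    by_cases hmem : v ∈ level N n
    · have hind :
          ∏ i ∈ range n, (Set.Ioi (v.getD i 0)).indicator (1 : ℕ → ℝ≥0∞) (N (v.take i)) = 1 :=
        prod_eq_one fun i hi =>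
          Set.indicator_of_mem ((mem_level_iff.1 hmem).2 i (mem_range.1 hi)) _
      rw [Set.indicator_of_mem (mem_coe.2 hmem), hind, one_mul]
    · obtain ⟨i, hi, hNi⟩ : ∃ i < n, ¬ v.getD i 0 < N (v.take i) := by
        simpa [mem_level_iff, hv] using hmem
      rw [Set.indicator_of_notMem (mt mem_coe.1 hmem),
        prod_eq_zero (mem_range.2 hi) (Set.indicator_of_notMem hNi _), zero_mul]
  · rw [if_neg hv, Set.indicator_of_notMem fun h => hv (mem_level_iff.1 (mem_coe.1 h)).1]

theorem apply_pos_le_levelWeight [Group G] {w : G → ℝ≥0∞} (h_one : w 1 ≤ 1)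
    (h_mul : ∀ x y, w (x * y) ≤ w x * w y) {N : List ℕ → ℕ} (ξ : List ℕ → G) {n : ℕ}
    {v : List ℕ} (hv : v ∈ level N n) : w (pos ξ v) ≤ levelWeight w N ξ n := by
  have hlen : v.length = n := (mem_level_iff.1 hv).1
  calc w (pos ξ v) ≤ ∏ i ∈ range n, w (ξ (v.take (i + 1))) := by
        rw [← hlen]
        exact (List.le_prod_of_submultiplicative w h_one h_mul _).trans_eq
          (by rw [List.map_map]; rfl)
    _ ≤ levelWeight w N ξ n :=
        single_le_sum (f := fun v => ∏ i ∈ range n, w (ξ (v.take (i + 1))))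
          (fun _ _ => zero_le) hv

end Weights

theorem tsum_ite_length_eq_pow_tsum (c : ℕ → ℝ≥0∞) (n : ℕ) :
    ∑' v : List ℕ, (if v.length = n then ∏ i ∈ range n, c (v.getD i 0) else 0)
      = (∑' j, c j) ^ n := by
  induction n with
  | zero =>
    rw [tsum_eq_single [] fun v hv => if_neg (mt List.length_eq_zero_iff.1 hv)]
    simp
  | succ n ih =>
    have hcons : Function.Injective fun p : ℕ × List ℕ => p.1 :: p.2 :=
      fun p q h => Prod.ext (List.cons.inj h).1 (List.cons.inj h).2
    rw [← hcons.tsum_eq fun v hv => ?_]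
    · have hterm : ∀ p : ℕ × List ℕ,
          (if (p.1 :: p.2).length = n + 1 then
            ∏ i ∈ range (n + 1), c ((p.1 :: p.2).getD i 0) else 0)
          = c p.1 * (if p.2.length = n then ∏ i ∈ range n, c (p.2.getD i 0) else 0) := by
        rintro ⟨j, u⟩
        by_cases hu : u.length = n
        · simp [hu, prod_range_succ', mul_comm]
        · simp [hu]
      simp only [hterm]
      rw [ENNReal.tsum_prod']
      simp_rw [ENNReal.tsum_mul_left, ih, ENNReal.tsum_mul_right, pow_succ']
    · rcases v with _ | ⟨j, u⟩
      · simp at hv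
      · exact ⟨(j, u), rfl⟩

theorem tsum_measure_Ioi_eq_tsum_mul (π : Measure ℕ) :
    ∑' j, π (Set.Ioi j) = ∑' k : ℕ, (k : ℝ≥0∞) * π {k} := by
  calc ∑' j, π (Set.Ioi j) = ∑' j, ∑' k, (Set.Ioi j).indicator (fun k => π {k}) k := by
        simp_rw [π.tsum_indicator_apply_singleton _ measurableSet_Ioi]
    _ = ∑' k, ∑' j, (range k : Set ℕ).indicator (fun _ => π {k}) j := by
        rw [ENNReal.tsum_comm]
        congr with k
        congr with j
        simp [Set.indicator_apply]
    _ = ∑' k : ℕ, (k : ℝ≥0∞) * π {k} := by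
        simp_rw [← sum_eq_tsum_indicator, sum_const, card_range, nsmul_eq_mul]

theorem tsum_natCast_mul_measure_singleton_eq_ofReal (π : Measure ℕ) [IsFiniteMeasure π]
    {ρ : ℝ} (hρ : HasSum (fun k : ℕ => (k : ℝ) * (π {k}).toReal) ρ) :
    ∑' k : ℕ, (k : ℝ≥0∞) * π {k} = ENNReal.ofReal ρ := by
  rw [← hρ.tsum_eq, ENNReal.ofReal_tsum_of_nonneg (fun k => by positivity) hρ.summable]
  congr with k
  rw [ENNReal.ofReal_mul k.cast_nonneg, ENNReal.ofReal_natCast,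
    ENNReal.ofReal_toReal (measure_ne_top π _)]

theorem _root_.ProbabilityTheory.iIndep.lintegral_prod_eq_prod_lintegral {Ω ι κ : Type*}
    {mΩ : MeasurableSpace Ω} {P : Measure Ω} {m : ι → MeasurableSpace Ω} (h : iIndep m P)
    (hm : ∀ i, m i ≤ mΩ) {e : κ → ι} (he : Function.Injective e) (s : Finset κ)
    {f : κ → Ω → ℝ≥0∞} (hf : ∀ k, Measurable[m (e k)] (f k)) :
    ∫⁻ ω, ∏ k ∈ s, f k ω ∂P = ∏ k ∈ s, ∫⁻ ω, f k ω ∂P := by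
  refine lintegral_prod_eq_prod_lintegral_of_indepFun s f ?_ fun k => (hf k).mono (hm _) le_rfl
  rw [iIndepFun_iff_iIndep (fun _ => inferInstance)]
  exact iIndep_of_iIndep_of_le (h.precomp he) fun k => (hf k).comap_le

theorem ae_limsup_div_le_of_tsum_ne_top {Ω : Type*} {mΩ : MeasurableSpace Ω} {P : Measure Ω}
    {X : ℕ → Ω → ℝ} (hX : ∀ n ω, 0 ≤ X n ω) {a : ℝ}
    (h : ∑' n : ℕ, P {ω | a * n < X n ω} ≠ ∞) :
    ∀ᵐ ω ∂P, limsup (fun n : ℕ => X n ω / n) atTop ≤ a := by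
  filter_upwards [ae_eventually_notMem h] with ω hω
  refine limsup_le_of_le (isCoboundedUnder_le_of_le atTop fun n => by positivity [hX n ω]) ?_
  filter_upwards [hω, eventually_gt_atTop 0] with n hn hpos
  rw [div_le_iff₀ (by exact_mod_cast hpos)]
  simpa [mul_comm] using hn

section BranchingRandomWalk

variable {G Ω : Type*} [MeasurableSpace G] {mΩ : MeasurableSpace Ω} {P : Measure Ω}
  {π : Measure ℕ} {μ : Measure G} {N : List ℕ → Ω → ℕ} {ξ : List ℕ → Ω → G}

theorem lintegral_pathWeight (hN_meas : ∀ v, Measurable (N v)) (hξ_meas : ∀ v, Measurable (ξ v))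
    (hN_law : ∀ v, P.map (N v) = π) (hξ_law : ∀ v, P.map (ξ v) = μ)
    (h_indep : iIndep (famSigma N ξ) P) {w : G → ℝ≥0∞} (hw : Measurable w) (v : List ℕ) :
    ∫⁻ ω, pathWeight w (fun u => N u ω) (fun u => ξ u ω) v ∂P
      = ∏ i ∈ range v.length, π (Set.Ioi (v.getD i 0)) * ∫⁻ x, w x ∂μ := by
  set n := v.length
  -- the offspring numbers and steps met along `v` are distinct members of the family
  let e : Fin n ⊕ Fin n → List ℕ ⊕ List ℕ :=
    Sum.map (fun i => v.take i) (fun i => v.take (i + 1))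
  have he : Function.Injective e := by
    refine Function.Injective.sumMap (fun i j hij => ?_) (fun i j hij => ?_) <;>
    · have := congrArg List.length hij
      simp only [List.length_take] at this
      omega
  let A : ℕ → Ω → ℝ≥0∞ := fun i ω => (Set.Ioi (v.getD i 0)).indicator 1 (N (v.take i) ω)
  let B : ℕ → Ω → ℝ≥0∞ := fun i ω => w (ξ (v.take (i + 1)) ω)
  let f : Fin n ⊕ Fin n → Ω → ℝ≥0∞ := fun k ω =>
    Sum.elim (fun i : Fin n => A i ω) (fun i : Fin n => B i ω) k
  have hf : ∀ k, Measurable[famSigma N ξ (e k)] (f k) := by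
    rintro (i | i)
    · exact (measurable_from_nat (f := (Set.Ioi (v.getD i 0)).indicator 1)).comp
        (comap_measurable _)
    · exact hw.comp (comap_measurable (ξ (v.take (i + 1))))
  have hA : ∀ i, ∫⁻ ω, A i ω ∂P = π (Set.Ioi (v.getD i 0)) := fun i => by
    rw [← lintegral_map measurable_from_nat (hN_meas _), hN_law,
      lintegral_indicator_one measurableSet_Ioi]
  have hB : ∀ i, ∫⁻ ω, B i ω ∂P = ∫⁻ x, w x ∂μ := fun i => by
    rw [← lintegral_map hw (hξ_meas _), hξ_law]
  have hsplit : ∀ a b : ℕ → ℝ≥0∞,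
      ∏ k : Fin n ⊕ Fin n, Sum.elim (fun i : Fin n => a i) (fun i : Fin n => b i) k
        = ∏ i ∈ range n, a i * b i := fun a b => by
    rw [Fintype.prod_sum_type, ← prod_mul_distrib]
    exact Fin.prod_univ_eq_prod_range (fun i => a i * b i) n
  calc ∫⁻ ω, pathWeight w (fun u => N u ω) (fun u => ξ u ω) v ∂P
      = ∫⁻ ω, ∏ k, f k ω ∂P := by
        refine lintegral_congr fun ω => ?_
        rw [hsplit (fun i => A i ω) (fun i => B i ω)]
        rfl
    _ = ∏ k, ∫⁻ ω, f k ω ∂P := by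
        refine h_indep.lintegral_prod_eq_prod_lintegral ?_ he _ hf
        rintro (u | u)
        · exact (hN_meas u).comap_le
        · exact (hξ_meas u).comap_le
    _ = ∏ i ∈ range v.length, π (Set.Ioi (v.getD i 0)) * ∫⁻ x, w x ∂μ := by
        rw [← hsplit]
        refine Fintype.prod_congr _ _ ?_
        rintro (i | i)
        · exact hA i
        · exact hB i

theorem measurable_pathWeight (hN_meas : ∀ v, Measurable (N v))
    (hξ_meas : ∀ v, Measurable (ξ v)) {w : G → ℝ≥0∞} (hw : Measurable w) (v : List ℕ) :
    Measurable fun ω => pathWeight w (fun u => N u ω) (fun u => ξ u ω) v :=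
  Finset.measurable_prod _ fun i _ =>
    ((measurable_from_nat (f := (Set.Ioi (v.getD i 0)).indicator 1)).comp (hN_meas _)).mul
      (hw.comp (hξ_meas _))

theorem measurable_levelWeight (hN_meas : ∀ v, Measurable (N v))
    (hξ_meas : ∀ v, Measurable (ξ v)) {w : G → ℝ≥0∞} (hw : Measurable w) (n : ℕ) :
    Measurable fun ω => levelWeight w (fun u => N u ω) (fun u => ξ u ω) n := by
  simp_rw [levelWeight_eq_tsum]
  refine Measurable.tsum fun v => ?_
  split_ifs
  exacts [measurable_pathWeight hN_meas hξ_meas hw v, measurable_const]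

/-- The many-to-one formula. -/
theorem lintegral_levelWeight (hN_meas : ∀ v, Measurable (N v))
    (hξ_meas : ∀ v, Measurable (ξ v)) (hN_law : ∀ v, P.map (N v) = π)
    (hξ_law : ∀ v, P.map (ξ v) = μ) (h_indep : iIndep (famSigma N ξ) P) {w : G → ℝ≥0∞}
    (hw : Measurable w) (n : ℕ) :
    ∫⁻ ω, levelWeight w (fun u => N u ω) (fun u => ξ u ω) n ∂P
      = ((∑' k : ℕ, (k : ℝ≥0∞) * π {k}) * ∫⁻ x, w x ∂μ) ^ n := by
  simp_rw [levelWeight_eq_tsum]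
  rw [lintegral_tsum fun v => by
    split_ifs
    exacts [(measurable_pathWeight hN_meas hξ_meas hw v).aemeasurable, aemeasurable_const]]
  have hterm : ∀ v : List ℕ, ∫⁻ ω, (if v.length = n then
      pathWeight w (fun u => N u ω) (fun u => ξ u ω) v else 0) ∂P
      = if v.length = n then ∏ i ∈ range n, π (Set.Ioi (v.getD i 0)) * ∫⁻ x, w x ∂μ else 0 := by
    intro v
    split_ifs with hv
    · rw [lintegral_pathWeight hN_meas hξ_meas hN_law hξ_law h_indep hw, hv]
    · exact lintegral_zero
  rw [tsum_congr hterm, tsum_ite_length_eq_pow_tsum fun j => π (Set.Ioi j) * ∫⁻ x, w x ∂μ,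
    ENNReal.tsum_mul_right, tsum_measure_Ioi_eq_tsum_mul]

theorem measure_lt_maxDisp_le [Group G] {nm : G → ℝ} (hnm_meas : Measurable nm)
    (hnm_one : nm 1 = 0) (hnm_mul : ∀ x y, nm (x * y) ≤ nm x + nm y)
    (hN_meas : ∀ v, Measurable (N v)) (hξ_meas : ∀ v, Measurable (ξ v))
    (hN_law : ∀ v, P.map (N v) = π) (hξ_law : ∀ v, P.map (ξ v) = μ)
    (h_indep : iIndep (famSigma N ξ) P) {t a : ℝ} (ht : 0 ≤ t) (ha : 0 ≤ a) (n : ℕ) :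
    P {ω | a * n < maxDisp nm (fun u => N u ω) (fun u => ξ u ω) n}
      ≤ ((∑' k : ℕ, (k : ℝ≥0∞) * π {k}) * (∫⁻ x, ENNReal.ofReal (Real.exp (t * nm x)) ∂μ)
          / ENNReal.ofReal (Real.exp (t * a))) ^ n := by
  set w : G → ℝ≥0∞ := fun x => ENNReal.ofReal (Real.exp (t * nm x))
  have hw : Measurable w := by fun_prop
  have hw_one : w 1 ≤ 1 := by simp [w, hnm_one]
  have hw_mul : ∀ x y, w (x * y) ≤ w x * w y := fun x y => by
    simp only [w]
    rw [← ENNReal.ofReal_mul (Real.exp_pos _).le, ← Real.exp_add, ← mul_add]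
    exact ENNReal.ofReal_le_ofReal (Real.exp_le_exp.2 (mul_le_mul_of_nonneg_left (hnm_mul x y) ht))
  set c := ENNReal.ofReal (Real.exp (t * a)) ^ n with hc_def
  have hc : c = ENNReal.ofReal (Real.exp (t * (a * n))) := by
    rw [hc_def, ← ENNReal.ofReal_pow (Real.exp_pos _).le, ← Real.exp_nat_mul]
    ring_nf
  have hsub : {ω | a * n < maxDisp nm (fun u => N u ω) (fun u => ξ u ω) n}
      ⊆ {ω | c ≤ levelWeight w (fun u => N u ω) (fun u => ξ u ω) n} := fun ω hω => by
    obtain ⟨v, hv, hlt⟩ := exists_mem_level_lt_of_lt_maxDisp (by positivity) hω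
    refine le_trans ?_ (apply_pos_le_levelWeight hw_one hw_mul _ hv)
    rw [hc]
    exact ENNReal.ofReal_le_ofReal (Real.exp_le_exp.2 (mul_le_mul_of_nonneg_left hlt.le ht))
  calc P {ω | a * n < maxDisp nm (fun u => N u ω) (fun u => ξ u ω) n}
      ≤ (∫⁻ ω, levelWeight w (fun u => N u ω) (fun u => ξ u ω) n ∂P) / c :=
        (measure_mono hsub).trans <| meas_ge_le_lintegral_div
          (measurable_levelWeight hN_meas hξ_meas hw n).aemeasurable (by simp [c, Real.exp_pos])
          (by simp [c])
    _ = _ := by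
      rw [lintegral_levelWeight hN_meas hξ_meas hN_law hξ_law h_indep hw, div_eq_mul_inv,
        div_eq_mul_inv, mul_pow, ENNReal.inv_pow]
      ring

theorem ae_limsup_maxDisp_div_le [Group G] {nm : G → ℝ} (hnm_meas : Measurable nm)
    (hnm_one : nm 1 = 0) (hnm_inv : ∀ x, nm x⁻¹ = nm x)
    (hnm_mul : ∀ x y, nm (x * y) ≤ nm x + nm y)
    (hN_meas : ∀ v, Measurable (N v)) (hξ_meas : ∀ v, Measurable (ξ v))
    (hN_law : ∀ v, P.map (N v) = π) (hξ_law : ∀ v, P.map (ξ v) = μ)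
    (h_indep : iIndep (famSigma N ξ) P) {t a : ℝ} (ht : 0 ≤ t) (ha : 0 ≤ a)
    (h : (∑' k : ℕ, (k : ℝ≥0∞) * π {k}) * ∫⁻ x, ENNReal.ofReal (Real.exp (t * nm x)) ∂μ
      < ENNReal.ofReal (Real.exp (t * a))) :
    ∀ᵐ ω ∂P, limsup (fun n : ℕ => maxDisp nm (fun v => N v ω) (fun u => ξ u ω) n / n) atTop
      ≤ a := by
  refine ae_limsup_div_le_of_tsum_ne_top
    (fun n ω => maxDisp_nonneg (nonneg_of_subadditive hnm_one hnm_inv hnm_mul)) ?_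
  refine ne_top_of_le_ne_top ?_ (ENNReal.tsum_le_tsum fun n => measure_lt_maxDisp_le hnm_meas
    hnm_one hnm_mul hN_meas hξ_meas hN_law hξ_law h_indep ht ha n)
  rw [ENNReal.tsum_geometric, ENNReal.inv_ne_top, ne_eq, tsub_eq_zero_iff_le, not_le]
  exact ENNReal.div_lt_of_lt_mul (by rwa [one_mul])

theorem ae_limsup_maxDisp_div_le_of_log_div_lt [Group G] [IsProbabilityMeasure π]
    [IsProbabilityMeasure μ] {nm : G → ℝ} (hnm_meas : Measurable nm) (hnm_one : nm 1 = 0)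
    (hnm_inv : ∀ x, nm x⁻¹ = nm x) (hnm_mul : ∀ x y, nm (x * y) ≤ nm x + nm y) {ρ : ℝ}
    (hρ : HasSum (fun k : ℕ => (k : ℝ) * (π {k}).toReal) ρ) (hρ1 : 1 < ρ)
    (hN_meas : ∀ v, Measurable (N v)) (hξ_meas : ∀ v, Measurable (ξ v))
    (hN_law : ∀ v, P.map (N v) = π) (hξ_law : ∀ v, P.map (ξ v) = μ)
    (h_indep : iIndep (famSigma N ξ) P) {t a : ℝ} (ht : 0 < t)
    (hint : Integrable (fun x => Real.exp (t * nm x)) μ)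
    (ha : Real.log (ρ * ∫ x, Real.exp (t * nm x) ∂μ) / t < a) :
    ∀ᵐ ω ∂P, limsup (fun n : ℕ => maxDisp nm (fun v => N v ω) (fun u => ξ u ω) n / n) atTop
      ≤ a := by
  have hϑ : 1 ≤ ∫ x, Real.exp (t * nm x) ∂μ := by
    simpa using integral_mono (integrable_const 1) hint fun x =>
      Real.one_le_exp (mul_nonneg ht.le (nonneg_of_subadditive hnm_one hnm_inv hnm_mul x))
  have hρϑ : 1 < ρ * ∫ x, Real.exp (t * nm x) ∂μ := by nlinarith
  have hlt : ρ * ∫ x, Real.exp (t * nm x) ∂μ < Real.exp (t * a) := by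
    rw [← Real.log_lt_iff_lt_exp (by linarith)]
    rw [div_lt_iff₀ ht] at ha
    linarith
  refine ae_limsup_maxDisp_div_le hnm_meas hnm_one hnm_inv hnm_mul hN_meas hξ_meas hN_law
    hξ_law h_indep ht.le ((div_nonneg (Real.log_nonneg hρϑ.le) ht.le).trans ha.le) ?_
  rw [tsum_natCast_mul_measure_singleton_eq_ofReal π hρ,
    ← ofReal_integral_eq_lintegral_ofReal hint (ae_of_all _ fun x => (Real.exp_pos _).le),
    ← ENNReal.ofReal_mul (by linarith)]
  exact (ENNReal.ofReal_lt_ofReal_iff (Real.exp_pos _)).2 hlt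

end BranchingRandomWalk

theorem maximal_displacement_linear_growth_general
    {G : Type*} [Group G] [MeasurableSpace G]
    -- the norm on the group
    (nm : G → ℝ) (hnm_meas : Measurable nm)
    (hnm_one : nm 1 = 0) (hnm_inv : ∀ x : G, nm x⁻¹ = nm x)
    (hnm_mul : ∀ x y : G, nm (x * y) ≤ nm x + nm y)
    -- the offspring distribution: supercritical with finite second moment, no deaths
    (π : Measure ℕ) [IsProbabilityMeasure π]
    (ρ : ℝ) (hρ : HasSum (fun k : ℕ => (k : ℝ) * (π {k}).toReal) ρ) (hρ1 : 1 < ρ)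
    -- the step distribution, with a finite exponential moment
    (μ : Measure G) [IsProbabilityMeasure μ]
    (hexp : ∃ t > (0 : ℝ), ∫⁻ x, ENNReal.ofReal (Real.exp (t * nm x)) ∂μ < ⊤)
    -- the branching random walk: i.i.d. offspring numbers `N v ∼ π` and steps `ξ v ∼ μ`,
    -- all jointly independent
    {Ω : Type*} [MeasurableSpace Ω] (P : Measure Ω)
    (N : List ℕ → Ω → ℕ) (ξ : List ℕ → Ω → G)
    (hN_meas : ∀ v, Measurable (N v)) (hξ_meas : ∀ v, Measurable (ξ v))
    (hN_law : ∀ v, Measure.map (N v) P = π) (hξ_law : ∀ v, Measure.map (ξ v) P = μ)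
    (h_indep : iIndep (famSigma N ξ) P)
    :
    (∀ t a : ℝ, 0 < t → Integrable (fun x => Real.exp (t * nm x)) μ →
        Real.log (ρ * ∫ x, Real.exp (t * nm x) ∂μ) / t < a →
        ∀ᵐ ω ∂P, Filter.limsup
          (fun n : ℕ => maxDisp nm (fun v => N v ω) (fun u => ξ u ω) n / n) atTop ≤ a) ∧
    ∃ a > (0 : ℝ), ∀ᵐ ω ∂P, Filter.limsup
      (fun n : ℕ => maxDisp nm (fun v => N v ω) (fun u => ξ u ω) n / n) atTop ≤ a := by
  refine ⟨fun t a ht hint ha => ae_limsup_maxDisp_div_le_of_log_div_lt hnm_meas hnm_one hnm_inv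
    hnm_mul hρ hρ1 hN_meas hξ_meas hN_law hξ_law h_indep ht hint ha, ?_⟩
  obtain ⟨t, ht, hfin⟩ := hexp
  have hint : Integrable (fun x => Real.exp (t * nm x)) μ :=
    ⟨by fun_prop, (hasFiniteIntegral_iff_ofReal (ae_of_all _ fun x => (Real.exp_pos _).le)).2 hfin⟩
  exact ⟨max (Real.log (ρ * ∫ x, Real.exp (t * nm x) ∂μ) / t) 0 + 1, by positivity,
    ae_limsup_maxDisp_div_le_of_log_div_lt hnm_meas hnm_one hnm_inv hnm_mul hρ hρ1 hN_meas hξ_meas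
      hN_law hξ_law h_indep ht hint ((le_max_left _ _).trans_lt (lt_add_one _))⟩

/-- Proposition 2 (at most linear growth of the maximal displacement): for every `t > 0` with
`ϑ₁(t) = ∫ e^{t|x|} dμ < ∞` and every `a > log(ρ·ϑ₁(t))/t`, almost surely
`limsup Maxₙ/n ≤ a`; in particular there is some `a > 0` such that almost surely
`limsup Maxₙ/n ≤ a`. -/
theorem maximal_displacement_linear_growth
    {G : Type*} [Group G] [MeasurableSpace G] [MeasurableMul₂ G]
    -- the norm on the group
    (nm : G → ℝ) (hnm_meas : Measurable nm)
    (hnm_one : nm 1 = 0) (hnm_inv : ∀ x : G, nm x⁻¹ = nm x)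
    (hnm_mul : ∀ x y : G, nm (x * y) ≤ nm x + nm y)
    -- the offspring distribution: supercritical with finite second moment, no deaths
    (π : Measure ℕ) [IsProbabilityMeasure π] (hπ0 : π {0} = 0)
    (ρ θ : ℝ) (hρ : HasSum (fun k : ℕ => (k : ℝ) * (π {k}).toReal) ρ) (hρ1 : 1 < ρ)
    (hθ : HasSum (fun k : ℕ => (k : ℝ) ^ 2 * (π {k}).toReal) θ)
    -- the step distribution, with a finite exponential moment
    (μ : Measure G) [IsProbabilityMeasure μ]
    (hexp : ∃ t > (0 : ℝ), ∫⁻ x, ENNReal.ofReal (Real.exp (t * nm x)) ∂μ < ⊤)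
    -- the branching random walk: i.i.d. offspring numbers `N v ∼ π` and steps `ξ v ∼ μ`,
    -- all jointly independent
    {Ω : Type*} [MeasurableSpace Ω] (P : Measure Ω) [IsProbabilityMeasure P]
    (N : List ℕ → Ω → ℕ) (ξ : List ℕ → Ω → G)
    (hN_meas : ∀ v, Measurable (N v)) (hξ_meas : ∀ v, Measurable (ξ v))
    (hN_law : ∀ v, Measure.map (N v) P = π) (hξ_law : ∀ v, Measure.map (ξ v) P = μ)
    (h_indep : iIndep (famSigma N ξ) P)
    :
    (∀ t a : ℝ, 0 < t → Integrable (fun x => Real.exp (t * nm x)) μ →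
        Real.log (ρ * ∫ x, Real.exp (t * nm x) ∂μ) / t < a →
        ∀ᵐ ω ∂P, Filter.limsup
          (fun n : ℕ => maxDisp nm (fun v => N v ω) (fun u => ξ u ω) n / n) atTop ≤ a) ∧
    ∃ a > (0 : ℝ), ∀ᵐ ω ∂P, Filter.limsup
      (fun n : ℕ => maxDisp nm (fun v => N v ω) (fun u => ξ u ω) n / n) atTop ≤ a :=
  maximal_displacement_linear_growth_general nm hnm_meas hnm_one hnm_inv hnm_mul π ρ hρ hρ1 μ hexp P
    N ξ hN_meas hξ_meas hN_law hξ_law h_indep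

end BRWPaper
end

section
/- Decomposition inequality for the mean displacement (deterministic part of Lemma 7): For every n ∈ ℕ and every k with 1 ≤ k ≤ n−1, define for each w ∈ T_k the set T_n^{(w)} = {v ∈ T_n : w is a prefix of v} and the random variable L_{n,k}^{(w)} = (1/((n−k) ρ^{n−k})) ∑_{v∈T_n^{(w)}} |X_w⁻¹ · X_v|. Then pointwise on Ω: |L_n − ((n−k)/(n ρ^k)) ∑_{w∈T_k} L_{n,k}^{(w)}| ≤ (1/(n ρⁿ)) ∑_{w∈T_k} |X_w| · |T_n^{(w)}|. -/
open MeasureTheory ProbabilityTheory Filter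
open scoped Topology ENNReal Classical

namespace BRWPaper

lemma length_of_mem_level {N : List ℕ → ℕ} : ∀ {n : ℕ} {v : List ℕ},
    v ∈ level N n → v.length = n := by
  intro n
  induction n with
  | zero =>
    intro v hv
    have : v = [] := Finset.mem_singleton.mp hv
    simp [this]
  | succ m ih =>
    intro v hv
    simp only [level, Finset.mem_biUnion, Finset.mem_image, Finset.mem_range] at hv
    obtain ⟨u, hu, j, _, rfl⟩ := hv
    simp [ih hu]

lemma take_mem_level {N : List ℕ → ℕ} : ∀ {n k : ℕ} {v : List ℕ},
    v ∈ level N n → k ≤ n → v.take k ∈ level N k := by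
  intro n
  induction n with
  | zero =>
    intro k v hv hk
    interval_cases k
    have : v = [] := Finset.mem_singleton.mp hv
    subst this
    exact hv
  | succ m ih =>
    intro k v hv hk
    rcases Nat.lt_or_ge k (m + 1) with h | h
    · simp only [level, Finset.mem_biUnion, Finset.mem_image, Finset.mem_range] at hv
      obtain ⟨u, hu, j, hj, rfl⟩ := hv
      have hlen : u.length = m := length_of_mem_level hu
      have hkm : k ≤ m := Nat.lt_succ_iff.mp h
      rw [List.take_append_of_le_length (by omega)]
      exact ih hu hkm
    · have hk' : k = m + 1 := le_antisymm hk h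
      subst hk'
      rwa [List.take_of_length_le (le_of_eq (length_of_mem_level hv))]

/-- Deterministic part of Lemma 7 (decomposition of the mean displacement): pointwise on `Ω`,
`|Lₙ − ((n−k)/(n ρᵏ)) ∑_{w ∈ T_k} L_{n,k}^{(w)}| ≤ (1/(n ρⁿ)) ∑_{w ∈ T_k} |X_w| · |Tₙ^{(w)}|`,
where `L_{n,k}^{(w)} = (1/((n−k) ρ^{n−k})) ∑_{v ∈ Tₙ^{(w)}} |X_w⁻¹ X_v|` and
`Tₙ^{(w)} = {v ∈ Tₙ : w` is a prefix of `v}`. -/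
theorem mean_displacement_decomposition
    {G : Type*} [Group G] [MeasurableSpace G] [MeasurableMul₂ G]
    -- the norm on the group
    (nm : G → ℝ) (hnm_meas : Measurable nm)
    (hnm_one : nm 1 = 0) (hnm_inv : ∀ x : G, nm x⁻¹ = nm x)
    (hnm_mul : ∀ x y : G, nm (x * y) ≤ nm x + nm y)
    -- the offspring distribution, with mean `ρ > 1` and no deaths
    (π : Measure ℕ) [IsProbabilityMeasure π] (hπ0 : π {0} = 0)
    (ρ : ℝ) (hρ : HasSum (fun k : ℕ => (k : ℝ) * (π {k}).toReal) ρ) (hρ1 : 1 < ρ)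
    -- the step distribution
    (μ : Measure G) [IsProbabilityMeasure μ]
    -- the branching random walk: i.i.d. offspring numbers `N v ∼ π` and steps `ξ v ∼ μ`,
    -- all jointly independent
    {Ω : Type*} [MeasurableSpace Ω] (P : Measure Ω) [IsProbabilityMeasure P]
    (N : List ℕ → Ω → ℕ) (ξ : List ℕ → Ω → G)
    (hN_meas : ∀ v, Measurable (N v)) (hξ_meas : ∀ v, Measurable (ξ v))
    (hN_law : ∀ v, Measure.map (N v) P = π) (hξ_law : ∀ v, Measure.map (ξ v) P = μ)
    (h_indep : iIndep (famSigma N ξ) P)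
    -- the statement, pointwise on `Ω`
    (ω : Ω) (n k : ℕ) (hk1 : 1 ≤ k) (hkn : k < n) :
    |(1 / (n * ρ ^ n)) * (∑ v ∈ level (fun v => N v ω) n, nm (pos (fun u => ξ u ω) v)) -
        (((n : ℝ) - k) / (n * ρ ^ k)) * ∑ w ∈ level (fun v => N v ω) k,
          (1 / (((n - k : ℕ) : ℝ) * ρ ^ (n - k))) *
            ∑ v ∈ (level (fun v => N v ω) n).filter fun v => w <+: v,
              nm ((pos (fun u => ξ u ω) w)⁻¹ * pos (fun u => ξ u ω) v)| ≤
      (1 / (n * ρ ^ n)) * ∑ w ∈ level (fun v => N v ω) k,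
        nm (pos (fun u => ξ u ω) w) *
          (((level (fun v => N v ω) n).filter fun v => w <+: v).card : ℝ) := by
  classical
  set Nω : List ℕ → ℕ := fun v => N v ω with hNω
  set X : List ℕ → G := pos (fun u => ξ u ω) with hX
  set f : List ℕ → ℝ := fun v => nm (X v) with hf
  have hρ0 : (0 : ℝ) < ρ := lt_trans one_pos hρ1
  have hn0 : (0 : ℕ) < n := lt_of_le_of_lt (Nat.zero_le k) hkn
  have hnk0 : (0 : ℕ) < n - k := Nat.sub_pos_of_lt hkn
  set c : ℝ := 1 / (n * ρ ^ n) with hc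
  have hc0 : 0 ≤ c := by positivity
  -- the fiber decomposition of level n over level k
  have hfilter : ∀ w ∈ level Nω k,
      ((level Nω n).filter fun v => w <+: v)
        = (level Nω n).filter fun v => v.take k = w := by
    intro w hw
    apply Finset.filter_congr
    intro v hv
    have hwlen : w.length = k := length_of_mem_level hw
    constructor
    · intro hpre
      simpa [hwlen] using (List.prefix_iff_eq_take.mp hpre).symm
    · intro htake
      rw [List.prefix_iff_eq_take, hwlen, htake]
  have hfib : ∀ g : List ℕ → ℝ, ∑ v ∈ level Nω n, g v
      = ∑ w ∈ level Nω k, ∑ v ∈ (level Nω n).filter fun v => w <+: v, g v := by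
    intro g
    have A := Finset.sum_fiberwise_of_maps_to (s := level Nω n) (t := level Nω k)
      (g := fun v => v.take k) (fun v hv => take_mem_level hv (le_of_lt hkn)) g
    rw [← A]
    exact Finset.sum_congr rfl fun w hw => by rw [hfilter w hw]
  -- simplify the constants in the second term
  have hconst : (((n : ℝ) - k) / (n * ρ ^ k)) * ∑ w ∈ level Nω k,
        (1 / (((n - k : ℕ) : ℝ) * ρ ^ (n - k))) *
          ∑ v ∈ (level Nω n).filter fun v => w <+: v, nm ((X w)⁻¹ * X v)
      = c * ∑ w ∈ level Nω k,
          ∑ v ∈ (level Nω n).filter fun v => w <+: v, nm ((X w)⁻¹ * X v) := by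
    rw [← Finset.mul_sum, ← mul_assoc, Finset.mul_sum, Finset.mul_sum]
    apply Finset.sum_congr rfl
    intro w _
    congr 1
    have hcast : ((n - k : ℕ) : ℝ) = (n : ℝ) - k := by
      rw [Nat.cast_sub (le_of_lt hkn)]
    have hpow : ρ ^ n = ρ ^ k * ρ ^ (n - k) := by
      rw [← pow_add]; congr 1; omega
    have hne1 : (n : ℝ) ≠ 0 := Nat.cast_ne_zero.mpr hn0.ne'
    have hne2 : ((n : ℝ) - k) ≠ 0 := by
      rw [← hcast]; exact Nat.cast_ne_zero.mpr hnk0.ne'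
    have hne3 : ρ ≠ 0 := hρ0.ne'
    rw [hcast, hc, hpow]
    field_simp
  rw [hconst, hfib f, ← mul_sub, ← Finset.sum_sub_distrib, abs_mul, abs_of_nonneg hc0]
  gcongr
  calc |∑ w ∈ level Nω k, (∑ v ∈ (level Nω n).filter (fun v => w <+: v), f v
          - ∑ v ∈ (level Nω n).filter (fun v => w <+: v), nm ((X w)⁻¹ * X v))|
      ≤ ∑ w ∈ level Nω k, |∑ v ∈ (level Nω n).filter (fun v => w <+: v), f v
          - ∑ v ∈ (level Nω n).filter (fun v => w <+: v), nm ((X w)⁻¹ * X v)| :=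
        Finset.abs_sum_le_sum_abs _ _
    _ ≤ ∑ w ∈ level Nω k, nm (X w) *
          (((level Nω n).filter fun v => w <+: v).card : ℝ) := by
        apply Finset.sum_le_sum
        intro w _
        rw [← Finset.sum_sub_distrib]
        calc |∑ v ∈ (level Nω n).filter (fun v => w <+: v),
                (f v - nm ((X w)⁻¹ * X v))|
            ≤ ∑ v ∈ (level Nω n).filter (fun v => w <+: v),
                |f v - nm ((X w)⁻¹ * X v)| := Finset.abs_sum_le_sum_abs _ _
          _ ≤ ∑ _v ∈ (level Nω n).filter (fun v => w <+: v), nm (X w) := by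
              apply Finset.sum_le_sum
              intro v _
              rw [abs_sub_le_iff]
              constructor
              · have := hnm_mul (X w) ((X w)⁻¹ * X v)
                rw [mul_inv_cancel_left] at this
                simpa [hf] using by linarith
              · have := hnm_mul (X w)⁻¹ (X v)
                rw [hnm_inv] at this
                simpa [hf] using by linarith
          _ = nm (X w) * (((level Nω n).filter fun v => w <+: v).card : ℝ) := by
              rw [Finset.sum_const, nsmul_eq_mul, mul_comm]

end BRWPaper
end

section
/- Weighted sums of differences of squared moduli of characteristic functions (Lemma 6, in the general form its proof establishes): Let (X_n)_{n≥1} be real-valued random variables on a probability space, ℓ ∈ ℝ and σ > 0 such that (X_n − nℓ)/(σ√n) converges in distribution to the standard normal N(0,1), and let b : ℕ → [0,∞) be summable, ∑_{k=0}^∞ b_k < ∞. Then for every t ∈ ℝ, lim_{n→∞} ∑_{k=0}^{n−1} b_k · | |E[e^{i (t/(σ√n)) X_{n−k}}]|² − |E[e^{i (t/(σ√n)) X_n}]|² | = 0. (The paper applies this with X_n = |Y_n| and b_k = P̂(τ = k)·(θ/ρ²)^k.) -/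
/-!
Standardize `Zₙ = (Xₙ - nℓ)/(σ√n)`. Pointwise convergence of the distribution functions of `Zₙ`
to `Φ` gives weak convergence of the laws of `Zₙ` (and of `Z_{n-k}`, for each fixed `k`) to
`N(0,1)`. For `n > k` the modulus of `E[exp(i t X_{n-k}/(σ√n))]` equals that of the
characteristic function of `Z_{n-k}` at `t √((n-k)/n)`, and since `√((n-k)/n) → 1`, Slutsky's
theorem makes it converge to `|φ_{N(0,1)}(t)|`. So every summand tends to `0`, and as the
summands are bounded by `b k`, dominated convergence for series finishes the proof.
-/

open MeasureTheory ProbabilityTheory Filter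
open scoped Topology ENNReal

/-- The distribution function `Φ` of the standard normal distribution. -/
noncomputable def stdGaussCDF (x : ℝ) : ℝ := (ProbabilityTheory.gaussianReal 0 1 (Set.Iic x)).toReal

namespace MeasureTheory

open Set in
theorem ProbabilityMeasure.tendsto_of_tendsto_cdf {ι : Type*} {l : Filter ι}
    [l.IsCountablyGenerated] {μ : ι → ProbabilityMeasure ℝ} {ν : ProbabilityMeasure ℝ}
    (h : ∀ x, Tendsto (fun i ↦ cdf (μ i) x) l (𝓝 (cdf ν x))) : Tendsto μ l (𝓝 ν) := by
  refine (isPiSystem_Ioc id id).tendsto_probabilityMeasure_of_tendsto_of_mem ?_ ?_ ?_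
  · rintro _ ⟨a, b, -, rfl⟩
    exact measurableSet_Ioc
  · intro u hu x hx
    obtain ⟨ε, hε, hball⟩ := Metric.isOpen_iff.mp hu x hx
    refine ⟨Ioc (x - ε / 2) (x + ε / 2), ⟨x - ε / 2, x + ε / 2, by simp; linarith, rfl⟩,
      Ioc_mem_nhds (by linarith) (by linarith), ?_⟩
    rw [Real.ball_eq_Ioo] at hball
    exact (Ioc_subset_Ioo (by linarith) (by linarith)).trans hball
  · rintro _ ⟨a, b, hab, rfl⟩
    simp only [id] at hab ⊢
    have hIoc (ρ : ProbabilityMeasure ℝ) : (ρ (Ioc a b) : ℝ) = cdf ρ b - cdf ρ a := by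
      rw [← measureReal_eq_coe_coeFn, ← Iic_sdiff_Iic, measureReal_sdiff (μ := (ρ : Measure ℝ))
        (Iic_subset_Iic.2 hab.le) measurableSet_Iic, cdf_eq_real, cdf_eq_real]
    rw [← NNReal.tendsto_coe]
    simpa only [hIoc] using (h b).sub (h a)

lemma tendstoInDistribution_id_of_tendsto_cdf {ι Ω : Type*} {mΩ : MeasurableSpace Ω}
    {P : Measure Ω} [IsProbabilityMeasure P] {l : Filter ι} [l.IsCountablyGenerated]
    {Y : ι → Ω → ℝ} (hY : ∀ i, AEMeasurable (Y i) P) {ν : Measure ℝ} [IsProbabilityMeasure ν]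
    (h : ∀ x, Tendsto (fun i ↦ cdf (P.map (Y i)) x) l (𝓝 (cdf ν x))) :
    TendstoInDistribution Y l id (fun _ ↦ P) ν where
  forall_aemeasurable := hY
  aemeasurable_limit := aemeasurable_id
  tendsto := ProbabilityMeasure.tendsto_of_tendsto_cdf (by simpa using h)

lemma TendstoInDistribution.tendsto_charFun_of_tendsto {ι Ω Ω' : Type*} {mΩ : MeasurableSpace Ω}
    {mΩ' : MeasurableSpace Ω'} {P : Measure Ω} [IsProbabilityMeasure P] {P' : Measure Ω'}
    [IsProbabilityMeasure P'] {l : Filter ι} [l.IsCountablyGenerated]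
    {Y : ι → Ω → ℝ} {Z : Ω' → ℝ} (h : TendstoInDistribution Y l Z (fun _ ↦ P) P')
    {u : ι → ℝ} {t : ℝ} (hu : Tendsto u l (𝓝 t)) :
    Tendsto (fun i ↦ charFun (P.map (Y i)) (u i)) l (𝓝 (charFun (P'.map Z) t)) := by
  have hu_meas : TendstoInMeasure P (fun i _ ↦ u i) l (fun _ ↦ t) := fun ε hε ↦ by
    refine tendsto_const_nhds.congr' ?_
    filter_upwards [(tendsto_order.1 (tendsto_iff_edist_tendsto_0.1 hu)).2 ε hε] with i hi
    simp [not_le.2 hi]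
  have hscaled : TendstoInDistribution (fun i ω ↦ u i * Y i ω) l (fun ω ↦ t * Z ω)
      (fun _ ↦ P) P' :=
    h.continuous_comp_prodMk_of_tendstoInMeasure_const (g := fun p ↦ p.2 * p.1)
      (by fun_prop) hu_meas (fun _ ↦ aemeasurable_const)
  have := (ProbabilityMeasure.tendsto_iff_forall_integral_rclike_tendsto ℂ).1 hscaled.tendsto
    (BoundedContinuousFunction.innerProbChar 1)
  simpa [← charFun_eq_integral_innerProbChar, charFun_map_mul_comp (h.forall_aemeasurable _),
    charFun_map_mul_comp h.aemeasurable_limit] using this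

lemma charFun_map_eq_integral {Ω : Type*} {mΩ : MeasurableSpace Ω} {P : Measure Ω}
    {Y : Ω → ℝ} (hY : AEMeasurable Y P) (s : ℝ) :
    charFun (P.map Y) s = ∫ ω, Complex.exp (Complex.I * s * Y ω) ∂P := by
  rw [charFun_apply_real, integral_map hY (by fun_prop)]
  simp_rw [mul_comm Complex.I, mul_right_comm]

lemma norm_charFun_map_sub_div {Ω : Type*} {mΩ : MeasurableSpace Ω} {P : Measure Ω}
    {Y : Ω → ℝ} (hY : AEMeasurable Y P) (a : ℝ) {c : ℝ} (hc : c ≠ 0) (s : ℝ) :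
    ‖charFun (P.map (fun ω ↦ (Y ω - a) / c)) (c * s)‖ = ‖charFun (P.map Y) s‖ := by
  have hcomp : (fun ω ↦ (Y ω - a) / c) = (c⁻¹ * ·) ∘ (· + -a) ∘ Y := by
    ext ω; simp [sub_eq_add_neg, div_eq_inv_mul]
  rw [hcomp, ← AEMeasurable.map_map_of_aemeasurable (by fun_prop)
    ((measurable_add_const (-a)).comp_aemeasurable hY),
    ← AEMeasurable.map_map_of_aemeasurable (by fun_prop) hY, charFun_map_mul,
    inv_mul_cancel_left₀ hc, charFun_map_add_const, norm_mul, Complex.norm_exp_ofReal_mul_I,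
    mul_one]

end MeasureTheory

open Finset in
lemma tendsto_sum_range_mul_of_summable {b : ℕ → ℝ} (hb0 : ∀ k, 0 ≤ b k) (hb : Summable b)
    {f : ℕ → ℕ → ℝ} {C : ℝ} (hfC : ∀ n k, |f n k| ≤ C)
    (hf : ∀ k, Tendsto (fun n ↦ f n k) atTop (𝓝 0)) :
    Tendsto (fun n ↦ ∑ k ∈ range n, b k * f n k) atTop (𝓝 0) := by
  have hdom := tendsto_tsum_of_dominated_convergence (𝓕 := atTop) (bound := fun k ↦ C * b k)
    (f := fun n ↦ (range n : Set ℕ).indicator fun k ↦ b k * f n k) (g := 0) (hb.mul_left C)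
    (fun k ↦ ?_) (.of_forall fun n k ↦ ?_)
  · simpa only [Pi.zero_apply, tsum_zero, ← sum_eq_tsum_indicator] using hdom
  · refine (by simpa using (hf k).const_mul (b k) : Tendsto (fun n ↦ b k * f n k) _ _).congr' ?_
    filter_upwards [eventually_gt_atTop k] with n hn
    simp [hn]
  · by_cases hk : k < n
    · simpa [hk, abs_mul, abs_of_nonneg (hb0 k), mul_comm C] using
        mul_le_mul_of_nonneg_left (hfC n k) (hb0 k)
    · simpa [hk] using mul_nonneg ((abs_nonneg _).trans (hfC 0 0)) (hb0 k)

lemma tendsto_sqrt_natSub_div_sqrt (k : ℕ) :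
    Tendsto (fun n : ℕ ↦ √((n - k : ℕ) : ℝ) / √n) atTop (𝓝 1) := by
  have hratio : Tendsto (fun n : ℕ ↦ ((n - k : ℕ) : ℝ) / n) atTop (𝓝 1) := by
    have := (tendsto_const_div_atTop_nhds_zero_nat (k : ℝ)).const_sub 1
    rw [sub_zero] at this
    refine this.congr' ?_
    filter_upwards [eventually_gt_atTop k] with n hn
    have hn0 : (n : ℝ) ≠ 0 := by exact_mod_cast (k.zero_le.trans_lt hn).ne'
    rw [Nat.cast_sub hn.le]
    field_simp
  simpa [Function.comp_def, Real.sqrt_div'] using (Real.continuous_sqrt.tendsto 1).comp hratio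

/-- Lemma 6 (in the general form established by its proof): if `(Xₙ − nℓ)/(σ√n)` converges in
distribution to the standard normal and `(b_k)` is a summable sequence of nonnegative reals,
then for every `t ∈ ℝ`,
`∑_{k=0}^{n−1} b_k · | |E[e^{i(t/(σ√n))X_{n−k}}]|² − |E[e^{i(t/(σ√n))Xₙ}]|² | → 0`. -/
theorem weighted_sums_of_squared_charFun_differences
    {Ω : Type*} [MeasurableSpace Ω] (P : Measure Ω) [IsProbabilityMeasure P]
    (X : ℕ → Ω → ℝ) (hX : ∀ n, Measurable (X n))
    (ℓ : ℝ) (σ : ℝ) (hσ : 0 < σ)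
    -- convergence in distribution to `N(0,1)` (the limit CDF is continuous everywhere, so
    -- this is pointwise convergence of distribution functions)
    (hclt : ∀ x : ℝ, Tendsto
      (fun n : ℕ => (P {ω | (X n ω - n * ℓ) / (σ * Real.sqrt n) ≤ x}).toReal)
      atTop (𝓝 (stdGaussCDF x)))
    (b : ℕ → ℝ) (hb0 : ∀ k, 0 ≤ b k) (hb : Summable b) :
    ∀ t : ℝ, Tendsto
      (fun n : ℕ => ∑ k ∈ Finset.range n, b k *
        |‖∫ ω, Complex.exp (Complex.I * ((t / (σ * Real.sqrt n) : ℝ) : ℂ) *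
            ((X (n - k) ω : ℝ) : ℂ)) ∂P‖ ^ 2 -
         ‖∫ ω, Complex.exp (Complex.I * ((t / (σ * Real.sqrt n) : ℝ) : ℂ) *
            ((X n ω : ℝ) : ℂ)) ∂P‖ ^ 2|)
      atTop (𝓝 0) := by
  intro t
  set Z : ℕ → Ω → ℝ := fun n ω ↦ (X n ω - n * ℓ) / (σ * √n)
  have hZ (n : ℕ) : Measurable (Z n) := ((hX n).sub_const _).div_const _
  have hcdf (x : ℝ) :
      Tendsto (fun n ↦ cdf (P.map (Z n)) x) atTop (𝓝 (cdf (gaussianReal 0 1) x)) := by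
    have hZcdf (n : ℕ) : cdf (P.map (Z n)) x = (P {ω | Z n ω ≤ x}).toReal := by
      have := Measure.isProbabilityMeasure_map (hZ n).aemeasurable (μ := P)
      rw [cdf_eq_real, map_measureReal_apply (hZ n) measurableSet_Iic]
      rfl
    simp only [hZcdf, cdf_eq_real]
    exact hclt x
  have hsq_le (m : ℕ) (s : ℝ) : ‖∫ ω, Complex.exp (Complex.I * s * X m ω) ∂P‖ ^ 2 ≤ 1 := by
    have := Measure.isProbabilityMeasure_map (hX m).aemeasurable (μ := P)
    rw [← charFun_map_eq_integral (hX m).aemeasurable]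
    exact pow_le_one₀ (norm_nonneg _) (norm_charFun_le_one _)
  have hlim (k : ℕ) : Tendsto (fun n : ℕ ↦ ‖∫ ω, Complex.exp (Complex.I *
      ((t / (σ * √n) : ℝ) : ℂ) * X (n - k) ω) ∂P‖) atTop
      (𝓝 ‖charFun (gaussianReal 0 1) t‖) := by
    rw [← Measure.map_id (μ := gaussianReal 0 1)]
    have hZk := tendstoInDistribution_id_of_tendsto_cdf (fun n ↦ (hZ (n - k)).aemeasurable)
      fun x ↦ (hcdf x).comp (tendsto_sub_atTop_nat k)
    have hu : Tendsto (fun n : ℕ ↦ σ * √(n - k : ℕ) * (t / (σ * √n))) atTop (𝓝 t) := by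
      have := (tendsto_sqrt_natSub_div_sqrt k).const_mul t
      rw [mul_one] at this
      refine this.congr fun n ↦ ?_
      have hσ0 := hσ.ne'
      field_simp
    refine (hZk.tendsto_charFun_of_tendsto hu).norm.congr' ?_
    filter_upwards [eventually_gt_atTop k] with n hn
    have hc : σ * √(n - k : ℕ) ≠ 0 :=
      mul_ne_zero hσ.ne' (Real.sqrt_ne_zero'.2 (by exact_mod_cast Nat.sub_pos_of_lt hn))
    rw [norm_charFun_map_sub_div (hX _).aemeasurable _ hc,
      charFun_map_eq_integral (hX _).aemeasurable]
  refine tendsto_sum_range_mul_of_summable hb0 hb (C := 1) (fun n k ↦ ?_) fun k ↦ ?_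
  · rw [abs_abs, ← sub_zero (1 : ℝ)]
    exact abs_sub_le_of_le_of_le (by positivity) (hsq_le _ _) (by positivity) (hsq_le _ _)
  · simpa using (((hlim k).pow 2).sub ((hlim 0).pow 2)).abs
end

section
/- The integrated-exponential family separates finite measures (Appendix Lemma 14): Let μ and ν be finite measures on ℝ such that for every y ∈ ℝ, ∫_ℝ (∫₀^y e^{i t x} dt) dμ(x) = ∫_ℝ (∫₀^y e^{i t x} dt) dν(x). Then μ = ν. Equivalently, the family of bounded continuous functions { x ↦ ∫₀^y e^{i t x} dt : y ∈ ℝ } is separating for finite measures on ℝ. -/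
/-!
After exchanging the two integrals, the hypothesis says that the primitives `y ↦ ∫₀^y φ` of the
characteristic functions `φ` of `μ` and `ν` agree. Characteristic functions are continuous, so
differentiating in `y` shows that they are equal, and a finite measure on `ℝ` is determined by its
characteristic function.
-/

open MeasureTheory Filter

open Complex in
lemma integral_intervalIntegral_cexp_eq_intervalIntegral_charFun (ρ : Measure ℝ)
    [IsFiniteMeasure ρ] (a b : ℝ) :
    ∫ x, (∫ t in a..b, cexp (I * t * x)) ∂ρ = ∫ t in a..b, charFun ρ t := by
  have h_int : Integrable (Function.uncurry fun t x : ℝ ↦ cexp (t * x * I))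
      ((volume.restrict (Set.uIoc a b)).prod ρ) := by
    have : IsFiniteMeasure (volume.restrict (Set.uIoc a b)) :=
      isFiniteMeasure_restrict.mpr measure_Ioc_lt_top.ne
    refine Integrable.of_bound (C := 1) (by fun_prop) (Eventually.of_forall fun ⟨t, x⟩ ↦ ?_)
    rw [Function.uncurry_apply_pair, ← ofReal_mul, norm_exp_ofReal_mul_I]
  simp_rw [charFun_apply_real, intervalIntegral_integral_swap h_int, mul_comm I, mul_right_comm]

/-- Appendix Lemma 14 (the integrated-exponential family separates finite measures): if two
finite measures `μ, ν` on `ℝ` satisfy `∫ (∫₀^y e^{itx} dt) dμ(x) = ∫ (∫₀^y e^{itx} dt) dν(x)`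
for every `y ∈ ℝ`, then `μ = ν`. -/
theorem integrated_exponential_family_separating
    (μ ν : Measure ℝ) [IsFiniteMeasure μ] [IsFiniteMeasure ν]
    (h : ∀ y : ℝ,
      ∫ x : ℝ, (∫ t in (0 : ℝ)..y, Complex.exp (Complex.I * (t : ℂ) * (x : ℂ))) ∂μ =
      ∫ x : ℝ, (∫ t in (0 : ℝ)..y, Complex.exp (Complex.I * (t : ℂ) * (x : ℂ))) ∂ν) :
    μ = ν := by
  simp_rw [integral_intervalIntegral_cexp_eq_intervalIntegral_charFun] at h
  refine Measure.ext_of_charFun (funext fun y ↦ ?_)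
  rw [← continuous_charFun.deriv_integral _ 0 y, ← continuous_charFun.deriv_integral _ 0 y,
    funext h]
end
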